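/- Let p and q be the regular-simplex-with-flaps configurations of N = (d+1)² points in E^d (p with inward flaps, q with outward flaps). Then there is no continuous expansion from p to q in E^{2d-1}: there do not exist continuous functions f_i : [0,1] → E^{2d-1}, i = 1,...,N, with f_i(0) = ι(p_i), f_i(1) = ι(q_i), and t ↦ |f_i(t) - f_j(t)| non-decreasing for all i < j, where ι : E^d → E^{2d-1} is the standard inclusion. -/

import Mathlib

open scoped RealInnerProductSpace

/-- Standard inclusion of `E^d` into `E^e`, padding with zeros. -/
def stdIncl (d e : ℕ) (u : EuclideanSpace ℝ (Fin d)) : EuclideanSpace ℝ (Fin e) :=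
  WithLp.toLp 2 fun m => if h : (m : ℕ) < d then u ⟨m, h⟩ else 0

/-- Index set for the configurations: the `d+1` simplex vertices together with the
flap vertices, one for each ordered pair `(i, j)` of distinct indices
(the vertex `b^i_j`, resp. `c^i_j`, of the `i`-th flap corresponding to `u j`). -/
def FlapIndex (d : ℕ) : Type :=
  Fin (d + 1) ⊕ {x : Fin (d + 1) × Fin (d + 1) // x.1 ≠ x.2}

/-!
A distance that is the same in `p` and in `q` cannot change during an expansion. Such rigid
distances include all edges of the simplex, every flap together with the opposite face, and all
flap vertices over a common base vertex. Hence at every time the simplex vertices `A j` stay a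
regular simplex, and each flap `i` moves as a single vector `W i = b^i_j - A j` of length `s`,
orthogonal to the face opposite `A i`, with `⟪W i, W k⟫ = -s² / d`. The quantity
`⟪W 0, A 0 - A 1⟫` is positive for `p` and negative for `q`, so it vanishes at some time. At that
moment the parts `Z i` of the `W i` orthogonal to the simplex are pairwise non-acute, `Z 0` being
obtuse to all the others; with the centered vertices this gives `2d` linearly independent vectors,
too many for `E^(2d-1)`.
-/

open Finset Module

section InnerProduct

variable {E F : Type*} [NormedAddCommGroup E] [InnerProductSpace ℝ E]
  [NormedAddCommGroup F] [InnerProductSpace ℝ F]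

lemma real_inner_sub_sub_eq_norm_sq (a b c e : F) :
    ⟪a - b, c - e⟫ = (‖a - e‖ ^ 2 + ‖b - c‖ ^ 2 - ‖a - c‖ ^ 2 - ‖b - e‖ ^ 2) / 2 := by
  rw [norm_sub_sq_real a e, norm_sub_sq_real b c, norm_sub_sq_real a c, norm_sub_sq_real b e,
    inner_sub_left, inner_sub_right, inner_sub_right]
  ring

lemma real_inner_sub_sub_eq_of_norm_sub_eq {a b c e : F} {a' b' c' e' : E}
    (hae : ‖a - e‖ = ‖a' - e'‖) (hbc : ‖b - c‖ = ‖b' - c'‖)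
    (hac : ‖a - c‖ = ‖a' - c'‖) (hbe : ‖b - e‖ = ‖b' - e'‖) :
    ⟪a - b, c - e⟫ = ⟪a' - b', c' - e'⟫ := by
  rw [real_inner_sub_sub_eq_norm_sq, real_inner_sub_sub_eq_norm_sq, hae, hbc, hac, hbe]

lemma sub_eq_sub_of_norm_sub_eq {a b c e : F} {a' b' c' e' : E}
    (hab : ‖a - b‖ = ‖a' - b'‖) (hce : ‖c - e‖ = ‖c' - e'‖)
    (hae : ‖a - e‖ = ‖a' - e'‖) (hbc : ‖b - c‖ = ‖b' - c'‖)
    (hac : ‖a - c‖ = ‖a' - c'‖) (hbe : ‖b - e‖ = ‖b' - e'‖) (h : a' - b' = c' - e') :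
    a - b = c - e := by
  have hsq : ‖(a - b) - (c - e)‖ ^ 2 = ‖(a' - b') - (c' - e')‖ ^ 2 := by
    rw [norm_sub_sq_real (a - b), norm_sub_sq_real (a' - b'), hab, hce,
      real_inner_sub_sub_eq_of_norm_sub_eq hae hbc hac hbe]
  rwa [h, sub_self, norm_zero, sq_eq_sq₀ (norm_nonneg _) le_rfl, norm_eq_zero,
    sub_eq_zero] at hsq

lemma sub_smul_sum_eq_smul_sum_sub {ι G : Type*} [Fintype ι] [Nonempty ι] [AddCommGroup G]
    [Module ℝ G] (A : ι → G) (i : ι) :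
    A i - (Fintype.card ι : ℝ)⁻¹ • ∑ k, A k = (Fintype.card ι : ℝ)⁻¹ • ∑ k, (A i - A k) := by
  have hn : (Fintype.card ι : ℝ) ≠ 0 := Nat.cast_ne_zero.2 Fintype.card_ne_zero
  rw [sum_sub_distrib, sum_const, card_univ, smul_sub, ← Nat.cast_smul_eq_nsmul ℝ, smul_smul,
    inv_mul_cancel₀ hn, one_smul]

lemma real_inner_sub_centroid_eq {ι : Type*} [Fintype ι] (A : ι → F) (u : ι → E)
    (h : ∀ i k j l, ⟪A i - A k, A j - A l⟫ = ⟪u i - u k, u j - u l⟫) (i j : ι) :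
    ⟪A i - (Fintype.card ι : ℝ)⁻¹ • ∑ k, A k, A j - (Fintype.card ι : ℝ)⁻¹ • ∑ k, A k⟫ =
      ⟪u i - (Fintype.card ι : ℝ)⁻¹ • ∑ k, u k, u j - (Fintype.card ι : ℝ)⁻¹ • ∑ k, u k⟫ := by
  have : Nonempty ι := ⟨i⟩
  simp only [sub_smul_sum_eq_smul_sum_sub, real_inner_smul_left, real_inner_smul_right, sum_inner,
    inner_sum, h]

theorem linearIndependent_of_inner_nonpos_of_inner_neg {ι : Type*} (v : ι → F) (w : F)
    (hv : Pairwise fun i j => ⟪v i, v j⟫ ≤ 0) (hw : ∀ i, ⟪w, v i⟫ < 0) :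
    LinearIndependent ℝ v := by
  have coeff_eq_zero : ∀ (t : Finset ι) (a : ι → ℝ), (∀ k, 0 ≤ a k) →
      ∑ k ∈ t, a k • v k = 0 → ∀ k ∈ t, a k = 0 := by
    intro t a ha hsum k hk
    have : ∑ k ∈ t, a k * ⟪w, v k⟫ = 0 := by
      simpa only [inner_sum, real_inner_smul_right, inner_zero_right] using congrArg (⟪w, ·⟫) hsum
    have hk0 := (sum_eq_zero_iff_of_nonpos fun k _ =>
      mul_nonpos_of_nonneg_of_nonpos (ha k) (hw k).le).1 this k hk
    exact (mul_eq_zero.1 hk0).resolve_right (hw k).ne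
  rw [linearIndependent_iff']
  intro t c hc i hi
  set x := ∑ k ∈ t, (c k)⁺ • v k
  set y := ∑ k ∈ t, (c k)⁻ • v k
  have hxy : x = y := by
    rw [← sub_eq_zero, ← sum_sub_distrib]
    simpa only [← sub_smul, posPart_sub_negPart] using hc
  have hx : x = 0 := by
    have hxy_nonpos : ⟪x, y⟫ ≤ 0 := by
      simp only [x, y, sum_inner, inner_sum, real_inner_smul_left, real_inner_smul_right]
      refine sum_nonpos fun k _ => sum_nonpos fun l _ => ?_
      rcases eq_or_ne k l with rfl | hkl
      · rcases le_total (c k) 0 with h | h <;> simp [h]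
      · exact mul_nonpos_of_nonneg_of_nonpos (negPart_nonneg _)
          (mul_nonpos_of_nonneg_of_nonpos (posPart_nonneg _) (hv hkl.symm))
    rw [← hxy] at hxy_nonpos
    exact real_inner_self_nonpos.1 hxy_nonpos
  have hpos := coeff_eq_zero t (fun k => (c k)⁺) (fun _ => posPart_nonneg _) hx i hi
  have hneg := coeff_eq_zero t (fun k => (c k)⁻) (fun _ => negPart_nonneg _) (hxy ▸ hx : y = 0) i hi
  rw [← posPart_sub_negPart (c i), hpos, hneg, sub_zero]

end InnerProduct

section RegularSimplex

variable {F : Type*} [NormedAddCommGroup F] [InnerProductSpace ℝ F]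

lemma sum_eq_add_mul_of_forall_ne {d : ℕ} (a : Fin (d + 1) → ℝ) (i : Fin (d + 1)) (c : ℝ)
    (h : ∀ j, j ≠ i → a j = c) : ∑ j, a j = a i + d * c := by
  rw [← add_sum_erase _ _ (mem_univ i), sum_congr rfl fun j hj => h j (ne_of_mem_erase hj),
    sum_const, card_erase_of_mem (mem_univ i), card_univ, Fintype.card_fin, nsmul_eq_mul,
    Nat.add_sub_cancel]

lemma sum_eq_zero_of_inner_eq_neg_inv {d : ℕ} (hd : d ≠ 0) (u : Fin (d + 1) → F)
    (hnorm : ∀ i, ‖u i‖ = 1) (hinner : ∀ i j, i ≠ j → ⟪u i, u j⟫ = -1 / d) :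
    ∑ i, u i = 0 := by
  have hd' : (d : ℝ) ≠ 0 := Nat.cast_ne_zero.2 hd
  refine real_inner_self_nonpos.1 (le_of_eq ?_)
  simp only [sum_inner, inner_sum]
  refine sum_eq_zero fun i _ => ?_
  rw [sum_eq_add_mul_of_forall_ne _ i (-1 / d) fun j hj => hinner j i hj,
    real_inner_self_eq_norm_sq, hnorm]
  field_simp
  ring

lemma real_inner_eq_neg_div_of_orthogonal_face {d : ℕ} (hd : d ≠ 0) (Y : Fin (d + 1) → F)
    (hY_norm : ∀ i, ‖Y i‖ = 1) (hY_inner : ∀ i j, i ≠ j → ⟪Y i, Y j⟫ = -1 / d) {w : F}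
    {i : Fin (d + 1)} (hw : ∀ j k, j ≠ i → k ≠ i → ⟪w, Y j - Y k⟫ = 0) {j : Fin (d + 1)}
    (hji : j ≠ i) :
    ⟪w, Y j⟫ = -⟪w, Y i⟫ / d := by
  have hsum : ∑ k, ⟪w, Y k⟫ = 0 := by
    rw [← inner_sum, sum_eq_zero_of_inner_eq_neg_inv hd Y hY_norm hY_inner, inner_zero_right]
  rw [sum_eq_add_mul_of_forall_ne _ i ⟪w, Y j⟫ fun k hki => by
    rw [← sub_eq_zero, ← inner_sub_right, hw k j hki hji]] at hsum
  field_simp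
  linarith

theorem two_mul_le_finrank_of_inner_nonpos_of_orthogonal [FiniteDimensional ℝ F] {d : ℕ}
    (Y Z : Fin (d + 1) → F) (i₀ : Fin (d + 1))
    (hY : ∀ i j, i ≠ j → ⟪Y i, Y j⟫ ≤ 0) (hY₀ : ∀ i, i ≠ i₀ → ⟪Y i₀, Y i⟫ < 0)
    (hZ : ∀ i j, i ≠ j → ⟪Z i, Z j⟫ ≤ 0) (hZ₀ : ∀ i, i ≠ i₀ → ⟪Z i₀, Z i⟫ < 0)
    (hYZ : ∀ i j, ⟪Y i, Z j⟫ = 0) :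
    2 * d ≤ finrank ℝ F := by
  set v : Fin d ⊕ Fin d → F := Sum.elim (fun i => Y (i₀.succAbove i)) (fun i => Z (i₀.succAbove i))
  have hv : Pairwise fun a b => ⟪v a, v b⟫ ≤ 0 := by
    rintro (i | i) (j | j) hij
    · exact hY _ _ fun h => hij (congrArg _ (Fin.succAbove_right_injective h))
    · exact (hYZ _ _).le
    · rw [real_inner_comm]
      exact (hYZ _ _).le
    · exact hZ _ _ fun h => hij (congrArg _ (Fin.succAbove_right_injective h))
  have hw : ∀ a, ⟪Y i₀ + Z i₀, v a⟫ < 0 := by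
    rintro (i | i)
    · simp only [v, Sum.elim_inl, inner_add_left]
      rw [real_inner_comm _ (Z i₀), hYZ, add_zero]
      exact hY₀ _ (Fin.succAbove_ne i₀ i)
    · simp only [v, Sum.elim_inr, inner_add_left, hYZ, zero_add]
      exact hZ₀ _ (Fin.succAbove_ne i₀ i)
  simpa [two_mul] using
    (linearIndependent_of_inner_nonpos_of_inner_neg v _ hv hw).fintype_card_le_finrank

theorem two_mul_le_finrank_of_flap_frame [FiniteDimensional ℝ F] {d : ℕ} {s : ℝ} (hs : 0 < s)
    (Y W : Fin (d + 1) → F)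
    (hY_norm : ∀ i, ‖Y i‖ = 1) (hY_inner : ∀ i j, i ≠ j → ⟪Y i, Y j⟫ = -1 / d)
    (hW_norm : ∀ i, ‖W i‖ = s) (hW_inner : ∀ i j, i ≠ j → ⟪W i, W j⟫ = -s ^ 2 / d)
    (hWY : ∀ i j k, j ≠ i → k ≠ i → ⟪W i, Y j - Y k⟫ = 0)
    {i₀ j₀ : Fin (d + 1)} (hj₀ : j₀ ≠ i₀) (hW₀ : ⟪W i₀, Y i₀ - Y j₀⟫ = 0) :
    2 * d ≤ finrank ℝ F := by
  have hd : d ≠ 0 := by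
    rintro rfl
    exact hj₀ (Fin.ext (by omega))
  have hd' : (0 : ℝ) < d := Nat.cast_pos.2 (Nat.pos_of_ne_zero hd)
  set c : Fin (d + 1) → ℝ := fun i => ⟪W i, Y i⟫
  have hWY_ne : ∀ i j, j ≠ i → ⟪W i, Y j⟫ = -c i / d := fun i j hji =>
    real_inner_eq_neg_div_of_orthogonal_face hd Y hY_norm hY_inner (hWY i) hji
  have hc_abs : ∀ i, |c i| ≤ s := fun i => by
    simpa only [hW_norm, hY_norm, mul_one] using abs_real_inner_le_norm (W i) (Y i)
  have hc₀ : c i₀ = 0 := by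
    rw [inner_sub_right, hWY_ne i₀ j₀ hj₀] at hW₀
    field_simp at hW₀
    nlinarith
  -- `W i` is orthogonal to the face opposite `Y i`, so this is its component orthogonal to all `Y`.
  set Z : Fin (d + 1) → F := fun i => W i - c i • Y i
  have hYZ : ∀ i j, ⟪Y j, Z i⟫ = 0 := by
    intro i j
    rw [inner_sub_right, real_inner_smul_right, real_inner_comm]
    rcases eq_or_ne j i with rfl | hji
    · rw [real_inner_self_eq_norm_sq, hY_norm, one_pow, mul_one, sub_self]
    · rw [hWY_ne i j hji, hY_inner j i hji]
      ring
  have hZZ : ∀ i j, i ≠ j → ⟪Z i, Z j⟫ = (c i * c j - s ^ 2) / d := by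
    intro i j hij
    simp only [Z, inner_sub_left, inner_sub_right, real_inner_smul_left, real_inner_smul_right]
    rw [hW_inner i j hij, hWY_ne i j hij.symm, real_inner_comm, hWY_ne j i hij,
      hY_inner i j hij]
    ring
  have hcc : ∀ i j, c i * c j ≤ s ^ 2 := fun i j => calc
    c i * c j ≤ |c i| * |c j| := abs_mul (c i) (c j) ▸ le_abs_self _
    _ ≤ s * s := mul_le_mul (hc_abs i) (hc_abs j) (abs_nonneg _) hs.le
    _ = s ^ 2 := (sq s).symm
  refine two_mul_le_finrank_of_inner_nonpos_of_orthogonal Y Z i₀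
    (fun i j hij => (hY_inner i j hij).trans_le
      (div_nonpos_of_nonpos_of_nonneg (by norm_num) hd'.le))
    (fun i hi => (hY_inner i₀ i hi.symm).trans_lt (div_neg_of_neg_of_pos (by norm_num) hd'))
    (fun i j hij => (hZZ i j hij).trans_le
      (div_nonpos_of_nonpos_of_nonneg (sub_nonpos.2 (hcc i j)) hd'.le))
    (fun i hi => (hZZ i₀ i hi.symm).trans_lt (div_neg_of_neg_of_pos (by simp [hc₀, hs]) hd'))
    fun i j => hYZ j i

end RegularSimplex

section StdIncl

lemma stdIncl_sub (d e : ℕ) (x y : EuclideanSpace ℝ (Fin d)) :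
    stdIncl d e (x - y) = stdIncl d e x - stdIncl d e y := by
  ext m
  simp only [stdIncl, PiLp.sub_apply]
  split <;> simp

lemma inner_stdIncl {d e : ℕ} (h : d ≤ e) (x y : EuclideanSpace ℝ (Fin d)) :
    ⟪stdIncl d e x, stdIncl d e y⟫ = ⟪x, y⟫ := by
  obtain ⟨k, rfl⟩ := Nat.exists_eq_add_of_le h
  simp [PiLp.inner_apply, stdIncl, Fin.sum_univ_add]

lemma norm_stdIncl {d e : ℕ} (h : d ≤ e) (x : EuclideanSpace ℝ (Fin d)) :
    ‖stdIncl d e x‖ = ‖x‖ := by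
  rw [norm_eq_sqrt_real_inner, norm_eq_sqrt_real_inner, inner_stdIncl h]

end StdIncl

theorem norm_sub_eq_of_monotoneOn {ι E : Type*} [SeminormedAddCommGroup E] (f : ι → ℝ → E)
    (hmono : ∀ a b, a ≠ b → MonotoneOn (fun t => ‖f a t - f b t‖) (Set.Icc 0 1)) {a b : ι}
    (hab : ‖f a 0 - f b 0‖ = ‖f a 1 - f b 1‖) {t : ℝ} (ht : t ∈ Set.Icc 0 1) :
    ‖f a t - f b t‖ = ‖f a 0 - f b 0‖ := by
  rcases eq_or_ne a b with rfl | hne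
  · simp
  have h0 : (0 : ℝ) ∈ Set.Icc 0 1 := ⟨le_rfl, zero_le_one⟩
  have h1 : (1 : ℝ) ∈ Set.Icc 0 1 := ⟨zero_le_one, le_rfl⟩
  exact le_antisymm (hab ▸ hmono a b hne ht h1 ht.2) (hmono a b hne h0 ht ht.1)

def RealizesRigidDistances {ι E F : Type*} [SeminormedAddCommGroup E] [SeminormedAddCommGroup F]
    (p q : ι → E) (X : ι → F) : Prop :=
  ∀ a b, ‖p a - p b‖ = ‖q a - q b‖ → ‖X a - X b‖ = ‖p a - p b‖

theorem realizesRigidDistances_of_monotoneOn {ι : Type*} {d e : ℕ} (hde : d ≤ e)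
    {p q : ι → EuclideanSpace ℝ (Fin d)} (f : ι → ℝ → EuclideanSpace ℝ (Fin e))
    (h0 : ∀ i, f i 0 = stdIncl d e (p i)) (h1 : ∀ i, f i 1 = stdIncl d e (q i))
    (hmono : ∀ a b, a ≠ b → MonotoneOn (fun t => ‖f a t - f b t‖) (Set.Icc 0 1))
    {t : ℝ} (ht : t ∈ Set.Icc 0 1) :
    RealizesRigidDistances p q (f · t) := by
  intro a b hab
  have hends : ‖f a 0 - f b 0‖ = ‖f a 1 - f b 1‖ := by
    rw [h0, h0, h1, h1, ← stdIncl_sub, ← stdIncl_sub, norm_stdIncl hde, norm_stdIncl hde, hab]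
  rw [norm_sub_eq_of_monotoneOn f hmono hends ht, h0, h0, ← stdIncl_sub, norm_stdIncl hde]

section FlapConfig

variable {E F : Type*} [NormedAddCommGroup E] [InnerProductSpace ℝ E] [NormedAddCommGroup F]
  {d : ℕ}

def FlapIndex.vertex (j : Fin (d + 1)) : FlapIndex d := Sum.inl j

def FlapIndex.flap (i j : Fin (d + 1)) (h : i ≠ j) : FlapIndex d := Sum.inr ⟨(i, j), h⟩

open FlapIndex

/-- The configuration `p` of the statement; `q` is `flapConfig u (-s)`. -/
def flapConfig (u : Fin (d + 1) → E) (s : ℝ) : FlapIndex d → E :=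
  Sum.elim u fun x => u x.1.2 + s • u x.1.1

variable {u : Fin (d + 1) → E} {s : ℝ} {X : FlapIndex d → F}

@[simp] lemma flapConfig_vertex (j : Fin (d + 1)) : flapConfig u s (vertex j) = u j := rfl

@[simp] lemma flapConfig_flap (i j : Fin (d + 1)) (h : i ≠ j) :
    flapConfig u s (flap i j h) = u j + s • u i := rfl

lemma flapConfig_neg (u : Fin (d + 1) → E) (s : ℝ) :
    flapConfig u (-s) = Sum.elim u fun x => u x.1.2 - s • u x.1.1 := by
  ext (j | x) <;> simp [flapConfig, sub_eq_add_neg]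

namespace RealizesRigidDistances

lemma norm_vertex_sub_vertex (hX : RealizesRigidDistances (flapConfig u s) (flapConfig u (-s)) X)
    (j k : Fin (d + 1)) :
    ‖X (vertex j) - X (vertex k)‖ = ‖u j - u k‖ :=
  hX _ _ rfl

lemma norm_flap_sub_vertex (hX : RealizesRigidDistances (flapConfig u s) (flapConfig u (-s)) X)
    (hinner : ∀ i j, i ≠ j → ⟪u i, u j⟫ = -1 / d) {i j k : Fin (d + 1)} (h : i ≠ j)
    (hki : k ≠ i) :
    ‖X (flap i j h) - X (vertex k)‖ = ‖u j + s • u i - u k‖ := by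
  refine hX _ _ ?_
  have hperp : ⟪s • u i, u j - u k⟫ = 0 := by
    rw [real_inner_smul_left, inner_sub_right, hinner i j h, hinner i k hki.symm, sub_self,
      mul_zero]
  simp only [flapConfig_flap, flapConfig_vertex, neg_smul, add_sub_right_comm _ (s • u i),
    ← sub_eq_add_neg, sub_right_comm _ (s • u i)]
  exact (norm_sub_eq_norm_add hperp).symm

lemma norm_vertex_sub_flap (hX : RealizesRigidDistances (flapConfig u s) (flapConfig u (-s)) X)
    (hinner : ∀ i j, i ≠ j → ⟪u i, u j⟫ = -1 / d) {i j k : Fin (d + 1)} (h : i ≠ j)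
    (hki : k ≠ i) :
    ‖X (vertex k) - X (flap i j h)‖ = ‖u k - (u j + s • u i)‖ := by
  rw [norm_sub_rev, hX.norm_flap_sub_vertex hinner h hki, norm_sub_rev]

lemma norm_flap_sub_vertex_self
    (hX : RealizesRigidDistances (flapConfig u s) (flapConfig u (-s)) X)
    (hnorm : ∀ i, ‖u i‖ = 1) (hinner : ∀ i j, i ≠ j → ⟪u i, u j⟫ = -1 / d)
    {i j : Fin (d + 1)} (h : i ≠ j) :
    ‖X (flap i j h) - X (vertex j)‖ = |s| := by
  rw [hX.norm_flap_sub_vertex hinner h h.symm, add_sub_cancel_left, norm_smul, hnorm,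
    Real.norm_eq_abs, mul_one]

lemma norm_flap_sub_flap_of_snd_eq
    (hX : RealizesRigidDistances (flapConfig u s) (flapConfig u (-s)) X)
    {i k j : Fin (d + 1)} (hi : i ≠ j) (hk : k ≠ j) :
    ‖X (flap i j hi) - X (flap k j hk)‖ = ‖u j + s • u i - (u j + s • u k)‖ := by
  refine hX _ _ ?_
  simp only [flapConfig_flap, add_sub_add_left_eq_sub, ← smul_sub, norm_smul, norm_neg]

lemma norm_flap_sub_flap_of_fst_eq
    (hX : RealizesRigidDistances (flapConfig u s) (flapConfig u (-s)) X)
    {i j k : Fin (d + 1)} (hj : i ≠ j) (hk : i ≠ k) :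
    ‖X (flap i j hj) - X (flap i k hk)‖ = ‖u j + s • u i - (u k + s • u i)‖ := by
  refine hX _ _ ?_
  simp only [flapConfig_flap, add_sub_add_right_eq_sub]

end RealizesRigidDistances

end FlapConfig

section FlapFrame

variable {E F : Type*} [NormedAddCommGroup E] [InnerProductSpace ℝ E]
  [NormedAddCommGroup F] [InnerProductSpace ℝ F] {d : ℕ} {u : Fin (d + 1) → E} {s : ℝ}
  {X : FlapIndex d → F}

open FlapIndex

namespace RealizesRigidDistances

lemma inner_vertex_sub_vertex
    (hX : RealizesRigidDistances (flapConfig u s) (flapConfig u (-s)) X) (i k j l : Fin (d + 1)) :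
    ⟪X (vertex i) - X (vertex k), X (vertex j) - X (vertex l)⟫ = ⟪u i - u k, u j - u l⟫ :=
  real_inner_sub_sub_eq_of_norm_sub_eq (hX.norm_vertex_sub_vertex i l)
    (hX.norm_vertex_sub_vertex k j) (hX.norm_vertex_sub_vertex i j) (hX.norm_vertex_sub_vertex k l)

lemma flap_sub_vertex_eq (hX : RealizesRigidDistances (flapConfig u s) (flapConfig u (-s)) X)
    (hinner : ∀ i j, i ≠ j → ⟪u i, u j⟫ = -1 / d) {i j k : Fin (d + 1)} (hj : i ≠ j)
    (hk : i ≠ k) :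
    X (flap i j hj) - X (vertex j) = X (flap i k hk) - X (vertex k) :=
  sub_eq_sub_of_norm_sub_eq (hX.norm_flap_sub_vertex hinner hj hj.symm)
    (hX.norm_flap_sub_vertex hinner hk hk.symm) (hX.norm_flap_sub_vertex hinner hj hk.symm)
    (hX.norm_vertex_sub_flap hinner hk hj.symm) (hX.norm_flap_sub_flap_of_fst_eq hj hk)
    (hX.norm_vertex_sub_vertex j k) (by simp only [add_sub_cancel_left])

lemma inner_flap_sub_vertex_flap_sub_vertex
    (hX : RealizesRigidDistances (flapConfig u s) (flapConfig u (-s)) X)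
    (hinner : ∀ i j, i ≠ j → ⟪u i, u j⟫ = -1 / d) {i k j : Fin (d + 1)} (hi : i ≠ j)
    (hk : k ≠ j) :
    ⟪X (flap i j hi) - X (vertex j), X (flap k j hk) - X (vertex j)⟫ = s ^ 2 * ⟪u i, u k⟫ := by
  rw [real_inner_sub_sub_eq_of_norm_sub_eq (hX.norm_flap_sub_vertex hinner hi hi.symm)
    (hX.norm_vertex_sub_flap hinner hk hk.symm) (hX.norm_flap_sub_flap_of_snd_eq hi hk)
    (hX.norm_vertex_sub_vertex j j), add_sub_cancel_left, add_sub_cancel_left,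
    real_inner_smul_left, real_inner_smul_right]
  ring

lemma inner_flap_sub_vertex_vertex_sub_vertex
    (hX : RealizesRigidDistances (flapConfig u s) (flapConfig u (-s)) X)
    (hinner : ∀ i j, i ≠ j → ⟪u i, u j⟫ = -1 / d) {i j k l : Fin (d + 1)} (h : i ≠ j)
    (hk : k ≠ i) (hl : l ≠ i) :
    ⟪X (flap i j h) - X (vertex j), X (vertex k) - X (vertex l)⟫ = 0 := by
  rw [real_inner_sub_sub_eq_of_norm_sub_eq (hX.norm_flap_sub_vertex hinner h hl)
    (hX.norm_vertex_sub_vertex j k) (hX.norm_flap_sub_vertex hinner h hk)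
    (hX.norm_vertex_sub_vertex j l), add_sub_cancel_left, real_inner_smul_left, inner_sub_right,
    hinner i k hk.symm, hinner i l hl.symm, sub_self, mul_zero]

end RealizesRigidDistances

lemma inner_flapConfig_flap_sub_vertex (hnorm : ∀ i, ‖u i‖ = 1)
    (hinner : ∀ i j, i ≠ j → ⟪u i, u j⟫ = -1 / d) (r : ℝ) {i j : Fin (d + 1)} (h : i ≠ j) :
    ⟪flapConfig u r (flap i j h) - flapConfig u r (vertex j),
      flapConfig u r (vertex i) - flapConfig u r (vertex j)⟫ = r * (1 + 1 / d) := by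
  rw [flapConfig_flap, flapConfig_vertex, flapConfig_vertex, add_sub_cancel_left,
    real_inner_smul_left, inner_sub_right, real_inner_self_eq_norm_sq, hnorm, hinner i j h]
  ring

theorem two_mul_le_finrank_of_realizesRigidDistances [FiniteDimensional ℝ F] (hd : 2 ≤ d)
    (hs : 0 < s) (hnorm : ∀ i, ‖u i‖ = 1) (hinner : ∀ i j, i ≠ j → ⟪u i, u j⟫ = -1 / d)
    (hX : RealizesRigidDistances (flapConfig u s) (flapConfig u (-s)) X)
    {i₀ j₀ : Fin (d + 1)} (h : i₀ ≠ j₀)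
    (h₀ : ⟪X (flap i₀ j₀ h) - X (vertex j₀), X (vertex i₀) - X (vertex j₀)⟫ = 0) :
    2 * d ≤ finrank ℝ F := by
  have : NeZero d := ⟨by omega⟩
  have hsucc : ∀ i : Fin (d + 1), i ≠ i + 1 := fun i hi =>
    Fin.zero_ne_one' (add_eq_left.1 hi.symm).symm
  set W : Fin (d + 1) → F := fun i => X (flap i (i + 1) (hsucc i)) - X (vertex (i + 1))
  have hW : ∀ i j (h : i ≠ j), W i = X (flap i j h) - X (vertex j) :=
    fun i j h => hX.flap_sub_vertex_eq hinner _ h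
  set Y : Fin (d + 1) → F :=
    fun i => X (vertex i) - (Fintype.card (Fin (d + 1)) : ℝ)⁻¹ • ∑ k, X (vertex k)
  have hYY : ∀ i j, ⟪Y i, Y j⟫ = ⟪u i, u j⟫ := fun i j => by
    simpa only [sum_eq_zero_of_inner_eq_neg_inv (by omega) u hnorm hinner, smul_zero, sub_zero]
      using real_inner_sub_centroid_eq (fun k => X (vertex k)) u hX.inner_vertex_sub_vertex i j
  have hY_sub : ∀ j k, Y j - Y k = X (vertex j) - X (vertex k) :=
    fun j k => sub_sub_sub_cancel_right _ _ _
  refine two_mul_le_finrank_of_flap_frame hs Y W (fun i => ?_) (fun i j hij => ?_) (fun i => ?_)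
    (fun i k hik => ?_) (fun i j k hj hk => ?_) h.symm ?_
  · rw [norm_eq_sqrt_real_inner, hYY, ← norm_eq_sqrt_real_inner, hnorm]
  · rw [hYY, hinner i j hij]
  · exact (hX.norm_flap_sub_vertex_self hnorm hinner _).trans (abs_of_pos hs)
  · obtain ⟨j, hji, hjk⟩ := Fin.exists_ne_and_ne_of_two_lt i k (by omega)
    rw [hW i j hji.symm, hW k j hjk.symm, hX.inner_flap_sub_vertex_flap_sub_vertex hinner,
      hinner i k hik]
    ring
  · rw [hY_sub]
    exact hX.inner_flap_sub_vertex_vertex_sub_vertex hinner _ hj hk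
  · rw [hY_sub, hW i₀ j₀ h]
    exact h₀

end FlapFrame

open FlapIndex in
theorem no_continuous_expansion_below_double_dimension
    (d : ℕ) (hd : 2 ≤ d) (s : ℝ) (hs : 0 < s)
    (u : Fin (d + 1) → EuclideanSpace ℝ (Fin d))
    (hnorm : ∀ i, ‖u i‖ = 1)
    (hinner : ∀ i j, i ≠ j → ⟪u i, u j⟫ = -1 / d)
    (p q : FlapIndex d → EuclideanSpace ℝ (Fin d))
    (hp : p = Sum.elim u (fun x => u x.1.2 + s • u x.1.1))
    (hq : q = Sum.elim u (fun x => u x.1.2 - s • u x.1.1)) :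
    ¬ ∃ f : FlapIndex d → ℝ → EuclideanSpace ℝ (Fin (2 * d - 1)),
      (∀ i, ContinuousOn (f i) (Set.Icc 0 1)) ∧
      (∀ i, f i 0 = stdIncl d (2 * d - 1) (p i)) ∧
      (∀ i, f i 1 = stdIncl d (2 * d - 1) (q i)) ∧
      (∀ i j, i ≠ j → MonotoneOn (fun t => ‖f i t - f j t‖) (Set.Icc (0 : ℝ) 1)) := by
  rintro ⟨f, hcont, h0, h1, hmono⟩
  rw [← flapConfig_neg] at hq
  subst hp hq
  have hde : d ≤ 2 * d - 1 := by omega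
  have : NeZero d := ⟨by omega⟩
  have h01 : (0 : Fin (d + 1)) ≠ 1 := Fin.zero_ne_one'
  set g : ℝ → ℝ := fun t => ⟪f (flap 0 1 h01) t - f (vertex 1) t, f (vertex 0) t - f (vertex 1) t⟫
  have hg_cont : ContinuousOn g (Set.Icc 0 1) :=
    ((hcont _).sub (hcont _)).inner ((hcont _).sub (hcont _))
  have hg_end : ∀ r t, (∀ i, f i t = stdIncl d (2 * d - 1) (flapConfig u r i)) →
      g t = r * (1 + 1 / d) := fun r t ht => by
    rw [← inner_flapConfig_flap_sub_vertex hnorm hinner r h01, ← inner_stdIncl hde]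
    simp only [g, ht, stdIncl_sub]
  have hpos : 0 < s * (1 + 1 / d) := by positivity
  obtain ⟨T, hT, hgT⟩ : (0 : ℝ) ∈ g '' Set.Icc 0 1 :=
    intermediate_value_Icc' zero_le_one hg_cont
      ⟨by rw [hg_end (-s) 1 h1]; linarith, by rw [hg_end s 0 h0]; exact hpos.le⟩
  have := two_mul_le_finrank_of_realizesRigidDistances hd hs hnorm hinner
    (realizesRigidDistances_of_monotoneOn hde f h0 h1 hmono hT) h01 hgT
  rw [finrank_euclideanSpace_fin] at this
  omega
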